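/- The local parity rule (rule 150) applied to the configuration with a single 1 on a circular lattice of size n ≥ 7 never reaches a homogeneous configuration; in particular rule 150 does not solve the parity problem. -/

import Mathlib

/-- Global rule of a one-dimensional binary circular CA of radius `r` on `n` cells. -/
def glob (r n : ℕ) (f : (Fin (2*r+1) → Bool) → Bool) (X : ZMod n → Bool) :
    ZMod n → Bool :=
  fun i => f (fun j => X (i + ((j : ℕ) : ZMod n) - (r : ZMod n)))

/-- Number of 1s (cells in state `true`) of a circular configuration. -/
def ones (n : ℕ) (X : ZMod n → Bool) : ℕ :=
  ((Finset.range n).filter (fun i : ℕ => X (i : ZMod n) = true)).card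

def allZeros (n : ℕ) : ZMod n → Bool := fun _ => false
def allOnes (n : ℕ) : ZMod n → Bool := fun _ => true

/-- The CA converges from `X` to `P`: `P` is a fixed point reached in finitely many steps. -/
def convergesTo (r n : ℕ) (f : (Fin (2*r+1) → Bool) → Bool)
    (X P : ZMod n → Bool) : Prop :=
  glob r n f P = P ∧ ∃ k, (glob r n f)^[k] X = P

/-- A rule is perfect if it solves the parity problem on every odd-sized circular lattice. -/
def PerfectRule (r : ℕ) (f : (Fin (2*r+1) → Bool) → Bool) : Prop :=
  ∀ n : ℕ, Odd n → ∀ X : ZMod n → Bool,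
    (Odd (ones n X) → convergesTo r n f X (allOnes n)) ∧
    (Even (ones n X) → convergesTo r n f X (allZeros n))

/-- Number of active transitions (cells changing state) in one step. -/
def activeCount (r n : ℕ) (f : (Fin (2*r+1) → Bool) → Bool) (X : ZMod n → Bool) : ℕ :=
  ((Finset.range n).filter
    (fun i : ℕ => glob r n f X (i : ZMod n) ≠ X (i : ZMod n))).card

/-- Rule 150: the local parity rule `f(a,b,c) = a XOR b XOR c`. -/
def rule150 (v : Fin (2*1+1) → Bool) : Bool := xor (v 0) (xor (v 1) (v 2))

/-- The configuration with a single 1 at position 0. -/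
def singleOne (n : ℕ) : ZMod n → Bool := fun i => decide (i = 0)

/-!
Read a configuration `X` as the polynomial `∑ Xᵢ tⁱ` in `𝔽₂[t]/(tⁿ - 1)`. Rule 150 multiplies it
by `t⁻¹(1 + t + t²)`, so after evaluation at an `n`-th root of unity `ζ` in a domain of
characteristic two, the `k`-th iterate of the single-1 configuration (the polynomial `1`) becomes
`ζ⁻ᵏ(1 + ζ + ζ²)ᵏ`, which is nonzero whenever `1 + ζ + ζ² ≠ 0`. The all-zeros configuration
evaluates to `0`, and the all-ones configuration to `∑ ζⁱ`. For even `n` take `ζ = 1`; for odd `n`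
take a primitive `n`-th root of unity, where `1 + ζ + ζ² ≠ 0` because `n ∤ 3`.
-/

open Finset

lemma glob_rule150_apply (n : ℕ) (X : ZMod n → Bool) (i : ZMod n) :
    glob 1 n rule150 X i = xor (X (i - 1)) (xor (X i) (X (i + 1))) := by
  norm_num [glob, rule150, add_sub_assoc]

lemma ite_xor_eq_add {K : Type*} [AddMonoidWithOne K] [CharP K 2] (a b : Bool) :
    (if xor a b then (1 : K) else 0) = (if a then 1 else 0) + (if b then 1 else 0) := by
  cases a <;> cases b <;> simp [one_add_one_eq_two, CharTwo.two_eq_zero]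

section ConfigEval

variable {n : ℕ} [NeZero n] {K : Type*} [CommRing K] {ζ : K}

def configEval (ζ : K) (X : ZMod n → Bool) : K :=
  ∑ i, (if X i then 1 else 0) * ζ ^ i.val

lemma pow_val_add_one (hζ : ζ ^ n = 1) (i : ZMod n) : ζ ^ (i + 1).val = ζ ^ i.val * ζ := by
  rw [ZMod.val_add, ZMod.val_one_eq_one_mod, ← pow_eq_pow_mod _ hζ, pow_add,
    ← pow_eq_pow_mod _ hζ, pow_one]

lemma configEval_comp_sub_one (hζ : ζ ^ n = 1) (X : ZMod n → Bool) :
    configEval ζ (fun i => X (i - 1)) = ζ * configEval ζ X := by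
  rw [configEval, configEval, mul_sum]
  refine (Fintype.sum_equiv (Equiv.addRight 1) _ _ fun i => ?_).symm
  simp only [Equiv.coe_addRight, add_sub_cancel_right, pow_val_add_one hζ]
  ring

lemma configEval_glob_rule150 [CharP K 2] (hζ : ζ ^ n = 1) (X : ZMod n → Bool) :
    ζ * configEval ζ (glob 1 n rule150 X) = (1 + ζ + ζ ^ 2) * configEval ζ X := by
  have hsplit : configEval ζ (glob 1 n rule150 X) = configEval ζ (fun i => X (i - 1)) +
      configEval ζ X + configEval ζ (fun i => X (i + 1)) := by
    simp only [configEval, ← sum_add_distrib, glob_rule150_apply, ite_xor_eq_add, add_mul,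
      add_assoc]
  have hright : ζ * configEval ζ (fun i => X (i + 1)) = configEval ζ X := by
    rw [← configEval_comp_sub_one hζ]
    simp only [sub_add_cancel]
  rw [hsplit, configEval_comp_sub_one hζ, mul_add, hright]
  ring

lemma configEval_iterate_glob_rule150 [CharP K 2] (hζ : ζ ^ n = 1) (X : ZMod n → Bool)
    (k : ℕ) :
    ζ ^ k * configEval ζ ((glob 1 n rule150)^[k] X) = (1 + ζ + ζ ^ 2) ^ k * configEval ζ X := by
  induction k with
  | zero => simp
  | succ k ih =>
    rw [Function.iterate_succ_apply', pow_succ, mul_assoc, configEval_glob_rule150 hζ,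
      mul_left_comm, ih, pow_succ]
    ring

lemma configEval_singleOne (ζ : K) : configEval ζ (singleOne n) = 1 := by
  rw [configEval, sum_eq_single 0 (fun i _ hi => by simp [singleOne, hi]) (by simp)]
  simp [singleOne]

lemma configEval_allZeros (ζ : K) : configEval ζ (allZeros n) = 0 := by
  simp [configEval, allZeros]

lemma configEval_allOnes (ζ : K) : configEval ζ (allOnes n) = ∑ i ∈ range n, ζ ^ i := by
  obtain ⟨m, rfl⟩ := Nat.exists_eq_succ_of_ne_zero (NeZero.ne n)
  simp only [configEval, allOnes, if_true, one_mul]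
  exact Fin.sum_univ_eq_sum_range _ _

lemma iterate_singleOne_ne_of_configEval_eq_zero [IsDomain K] [CharP K 2] (hζ : ζ ^ n = 1)
    (h3 : 1 + ζ + ζ ^ 2 ≠ 0) {Y : ZMod n → Bool} (hY : configEval ζ Y = 0) (k : ℕ) :
    (glob 1 n rule150)^[k] (singleOne n) ≠ Y := by
  rintro rfl
  have h := configEval_iterate_glob_rule150 hζ (singleOne n) k
  rw [hY, configEval_singleOne, mul_zero, mul_one] at h
  exact pow_ne_zero k h3 h.symm

end ConfigEval

theorem iterate_singleOne_ne_allZeros (n : ℕ) [NeZero n] (k : ℕ) :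
    (glob 1 n rule150)^[k] (singleOne n) ≠ allZeros n :=
  iterate_singleOne_ne_of_configEval_eq_zero (ζ := (1 : ZMod 2)) (one_pow n) (by decide)
    (configEval_allZeros 1) k

theorem iterate_singleOne_ne_allOnes (n : ℕ) [NeZero n] (h3 : ¬ n ∣ 3) (k : ℕ) :
    (glob 1 n rule150)^[k] (singleOne n) ≠ allOnes n := by
  rcases Nat.even_or_odd n with hn | hn
  · refine iterate_singleOne_ne_of_configEval_eq_zero (ζ := (1 : ZMod 2)) (one_pow n)
      (by decide) ?_ k
    rw [configEval_allOnes]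
    simpa using (ZMod.natCast_eq_zero_iff n 2).mpr hn.two_dvd
  · have : NeZero (n : ZMod 2) := ⟨ZMod.natCast_ne_zero_iff_odd.mpr hn⟩
    obtain ⟨ζ, hζ⟩ := HasEnoughRootsOfUnity.exists_primitiveRoot (AlgebraicClosure (ZMod 2)) n
    have h1 : 1 < n := Nat.one_lt_iff_ne_zero_and_ne_one.mpr
      ⟨NeZero.ne n, by rintro rfl; exact h3 (one_dvd 3)⟩
    refine iterate_singleOne_ne_of_configEval_eq_zero hζ.pow_eq_one ?_ ?_ k
    · intro h0
      have hcube : ζ ^ 3 = 1 := by linear_combination (ζ - 1) * h0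
      exact h3 ((hζ.pow_eq_one_iff_dvd 3).mp hcube)
    · rw [configEval_allOnes, hζ.geom_sum_eq_zero h1]

/-- rule 150 from the single-1 configuration on a circular lattice of
size `n ≥ 7` never reaches a homogeneous configuration; in particular it is not a
perfect parity rule. -/
theorem stmt3 (n : ℕ) (hn : 7 ≤ n) :
    (∀ k : ℕ, (glob 1 n rule150)^[k] (singleOne n) ≠ allZeros n ∧
              (glob 1 n rule150)^[k] (singleOne n) ≠ allOnes n) ∧
    ¬ PerfectRule 1 rule150 := by
  have : NeZero n := ⟨by omega⟩
  have h3 : ¬ n ∣ 3 := fun h => by have := Nat.le_of_dvd (by norm_num) h; omega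
  refine ⟨fun k => ⟨iterate_singleOne_ne_allZeros n k, iterate_singleOne_ne_allOnes n h3 k⟩,
    fun hP => ?_⟩
  have hodd : Odd (ones 5 (singleOne 5)) := by decide
  obtain ⟨-, k, hk⟩ := (hP 5 (by decide) (singleOne 5)).1 hodd
  exact iterate_singleOne_ne_allOnes 5 (by norm_num) k hk
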